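/- arXiv:math/0610083 — 2 statements merged into one kernel-verified Lean document; each statement's English description precedes it below -/
import Mathlib

section
/- Let α ∈ Z²(G,k*) be a normalized 2-cocycle on a finite group G and ε(g,h) := α(g,h)/α(ghg⁻¹,g). If g₁, g₂, h pairwise commute, then ε(g₁g₂, h) = ε(g₁,h)·ε(g₂,h) and ε(h, g₁g₂) = ε(h,g₁)·ε(h,g₂). -/
theorem stmt_7
    {G : Type*} [Group G] [Finite G]
    {k : Type*} [Field k] [CharZero k] (α : G → G → k)
    (hne : ∀ g h : G, α g h ≠ 0)
    (hcoc : ∀ g h m : G, α g h * α (g * h) m = α g (h * m) * α h m)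
    (hnorm₁ : ∀ g : G, α g 1 = 1) (hnorm₂ : ∀ g : G, α 1 g = 1)
    (g₁ g₂ h : G) (h12 : g₁ * g₂ = g₂ * g₁) (h1h : g₁ * h = h * g₁)
    (h2h : g₂ * h = h * g₂) :
    α (g₁ * g₂) h / α (g₁ * g₂ * h * (g₁ * g₂)⁻¹) (g₁ * g₂)
        = (α g₁ h / α (g₁ * h * g₁⁻¹) g₁) * (α g₂ h / α (g₂ * h * g₂⁻¹) g₂) ∧
    α h (g₁ * g₂) / α (h * (g₁ * g₂) * h⁻¹) h
        = (α h g₁ / α (h * g₁ * h⁻¹) h) * (α h g₂ / α (h * g₂ * h⁻¹) h) := by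
  have c12 : g₁ * g₂ * h = h * (g₁ * g₂) := by
    rw [mul_assoc, h2h, ← mul_assoc, h1h, mul_assoc]
  have e1 : g₁ * g₂ * h * (g₁ * g₂)⁻¹ = h := by rw [c12, mul_inv_cancel_right]
  have e2 : g₁ * h * g₁⁻¹ = h := by rw [h1h, mul_inv_cancel_right]
  have e3 : g₂ * h * g₂⁻¹ = h := by rw [h2h, mul_inv_cancel_right]
  have e4 : h * (g₁ * g₂) * h⁻¹ = g₁ * g₂ := by rw [← c12, mul_inv_cancel_right]
  have e5 : h * g₁ * h⁻¹ = g₁ := by rw [← h1h, mul_inv_cancel_right]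
  have e6 : h * g₂ * h⁻¹ = g₂ := by rw [← h2h, mul_inv_cancel_right]
  rw [e1, e2, e3, e4, e5, e6]
  have A := hcoc g₁ g₂ h
  have B := hcoc g₁ h g₂
  rw [← h2h] at B
  have C := hcoc h g₁ g₂
  rw [← h1h] at C
  constructor
  · rw [div_mul_div_comm, div_eq_div_iff (hne _ _) (mul_ne_zero (hne _ _) (hne _ _))]
    have key : α (g₁ * g₂) h * (α h g₁ * α h g₂) * α g₁ g₂
        = α g₁ h * α g₂ h * α h (g₁ * g₂) * α g₁ g₂ := by
      linear_combination (α h g₁ * α h g₂) * A + (-(α g₂ h * α h g₁)) * B +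
        (α g₁ h * α g₂ h) * C
    exact mul_right_cancel₀ (hne g₁ g₂) key
  · rw [div_mul_div_comm, div_eq_div_iff (hne _ _) (mul_ne_zero (hne _ _) (hne _ _))]
    have key : α h (g₁ * g₂) * (α g₁ h * α g₂ h) * α g₁ g₂
        = α h g₁ * α h g₂ * α (g₁ * g₂) h * α g₁ g₂ := by
      linear_combination (-(α h g₁ * α h g₂)) * A + (α g₂ h * α h g₁) * B +
        (-(α g₁ h * α g₂ h)) * C
    exact mul_right_cancel₀ (hne g₁ g₂) key
end

section
/- Let A = ⊕_{g∈G} A_g be a G-graded algebra over k with a G-action φ: G → Aut(A) by algebra automorphisms satisfying φ_g(A_h) ⊆ A_{ghg⁻¹}, such that A satisfies twisted commutativity a_g ∘ a_h = φ_g(a_h) ∘ a_g. Let α ∈ Z²(G,k*) be normalized and set ε(g,h) = α(g,h)/α(ghg⁻¹,g). Then the twisted algebra with multiplication a_g ∘^α b_h := α(g,h)·(a_g ∘ b_h) and G-action φ^α_g|_{A_h} := ε(g,h)·φ_g satisfies twisted commutativity: a_g ∘^α a_h = φ^α_g(a_h) ∘^α a_g. -/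
theorem twisted_commutativity_of_twist
    {G : Type*} [Group G] [Finite G]
    {k : Type*} [Field k] [CharZero k]
    {A : Type*} [Ring A] [Algebra k A]
    (ℬ : G → Submodule k A)
    (hgrading : ∀ g h : G, ∀ a ∈ ℬ g, ∀ b ∈ ℬ h, a * b ∈ ℬ (g * h))
    (φ : G → (A →ₐ[k] A))
    (hφgrade : ∀ g h : G, ∀ b ∈ ℬ h, φ g b ∈ ℬ (g * h * g⁻¹))
    (htwcomm : ∀ g h : G, ∀ a ∈ ℬ g, ∀ b ∈ ℬ h, a * b = φ g b * a)
    (α : G → G → k)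
    (hne : ∀ g h : G, α g h ≠ 0)
    (hcoc : ∀ g h m : G, α g h * α (g * h) m = α g (h * m) * α h m)
    (hnorm₁ : ∀ g : G, α g 1 = 1) (hnorm₂ : ∀ g : G, α 1 g = 1)
    (g h : G) (a b : A) (ha : a ∈ ℬ g) (hb : b ∈ ℬ h) :
    α g h • (a * b)
      = α (g * h * g⁻¹) g • (((α g h / α (g * h * g⁻¹) g) • φ g b) * a) := by
  rw [smul_mul_assoc, smul_smul, mul_div_cancel₀ _ (hne _ _), htwcomm g h a ha b hb]
end
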